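/- arXiv:1903.00414 — 6 statements merged into one kernel-verified Lean document; each statement's English description precedes it below -/
import Mathlib

section
/- Pure-injective R-modules are amalgamation bases for pure embeddings in any class of R-modules closed under direct sums: given pure embeddings N → N₁ and N → N₂ with N pure-injective, there exist a module L (a direct sum of N₁ and N₂) and pure embeddings f₁ : N₁ → L and f₂ : N₂ → L agreeing on N. -/
universe u v w

/-- A linear map is a *pure embedding* if it is injective and every finite system of
linear equations with parameters in `M` that is solvable in `N` (via `f`) is solvable in `M`. -/
def IsPureMap (R : Type u) [Ring R] {M : Type*} {N : Type*} [AddCommGroup M] [Module R M]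
    [AddCommGroup N] [Module R N] (f : M →ₗ[R] N) : Prop :=
  Function.Injective f ∧
    ∀ (n m : ℕ) (A : Fin n → Fin m → R) (v : Fin n → M),
      (∃ x : Fin m → N, ∀ i, ∑ j, A i j • x j = f (v i)) →
      ∃ x : Fin m → M, ∀ i, ∑ j, A i j • x j = v i

/-- A module is *pure-injective* if every pure embedding out of it splits,
i.e. it is a direct summand of every pure extension. -/
def IsPureInjective (R : Type u) [Ring R] (M : Type v) [AddCommGroup M] [Module R M] : Prop :=
  ∀ (N : Type v) [AddCommGroup N] [Module R N] (f : M →ₗ[R] N),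
    IsPureMap R f → ∃ g : N →ₗ[R] M, g.comp f = LinearMap.id


/-- A linear map with a linear left inverse is a pure embedding. -/
theorem isPureMap_of_leftInverse (R : Type u) [Ring R] {M : Type*} {N : Type*}
    [AddCommGroup M] [Module R M] [AddCommGroup N] [Module R N]
    (f : M →ₗ[R] N) (g : N →ₗ[R] M) (hg : g.comp f = LinearMap.id) : IsPureMap R f := by
  have hgf : ∀ x, g (f x) = x := fun x => congrArg (fun h => h x) hg
  constructor
  · intro a b hab
    have := congrArg g hab
    simpa [hgf] using this
  · rintro n m A v ⟨x, hx⟩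
    refine ⟨fun j => g (x j), fun i => ?_⟩
    have := congrArg g (hx i)
    simpa [map_sum, map_smul, hgf] using this

/-- Pure-injective modules are amalgamation bases for pure embeddings:
given pure embeddings `g₁ : N → N₁` and `g₂ : N → N₂` with `N` pure-injective, the direct
sum `N₁ ⊕ N₂` receives pure embeddings from `N₁` and `N₂` agreeing on `N`. -/
theorem pureInjective_amalgamation_base
    (R : Type u) [Ring R] (N N₁ N₂ : Type v)
    [AddCommGroup N] [Module R N] [AddCommGroup N₁] [Module R N₁]
    [AddCommGroup N₂] [Module R N₂]
    (hN : IsPureInjective R N)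
    (g₁ : N →ₗ[R] N₁) (hg₁ : IsPureMap R g₁)
    (g₂ : N →ₗ[R] N₂) (hg₂ : IsPureMap R g₂) :
    ∃ (f₁ : N₁ →ₗ[R] N₁ × N₂) (f₂ : N₂ →ₗ[R] N₁ × N₂),
      IsPureMap R f₁ ∧ IsPureMap R f₂ ∧ f₁.comp g₁ = f₂.comp g₂ := by
  obtain ⟨r₁, hr₁⟩ := hN N₁ g₁ hg₁
  obtain ⟨r₂, hr₂⟩ := hN N₂ g₂ hg₂
  have hr₁' : ∀ x, r₁ (g₁ x) = x := fun x => congrArg (fun h => h x) hr₁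
  have hr₂' : ∀ x, r₂ (g₂ x) = x := fun x => congrArg (fun h => h x) hr₂
  refine ⟨LinearMap.prod LinearMap.id (g₂.comp r₁),
    LinearMap.prod (g₁.comp r₂) LinearMap.id, ?_, ?_, ?_⟩
  · exact isPureMap_of_leftInverse R _ (LinearMap.fst R N₁ N₂) (by ext x <;> simp)
  · exact isPureMap_of_leftInverse R _ (LinearMap.snd R N₁ N₂) (by ext x <;> simp)
  · ext x <;> simp [hr₁', hr₂']
end

section
/- A directed union of a directed system of R-modules, where all maps are pure embeddings, receives each module of the system via a pure embedding; moreover if all modules in the system are pure in a fixed module L, then the union is pure in L (smoothness). -/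
universe u v w

/-- `IsPureIn R p q` : the submodule `p` is a *pure* submodule of `q` (where `p ≤ q` are
submodules of an ambient module): every finite system of linear equations with parameters
in `p` that is solvable in `q` is solvable in `p`. -/
def IsPureIn (R : Type u) [Ring R] {V : Type v} [AddCommGroup V] [Module R V]
    (p q : Submodule R V) : Prop :=
  p ≤ q ∧
    ∀ (n m : ℕ) (A : Fin n → Fin m → R) (v : Fin n → V), (∀ i, v i ∈ p) →
      (∃ x : Fin m → V, (∀ j, x j ∈ q) ∧ ∀ i, ∑ j, A i j • x j = v i) →
      ∃ x : Fin m → V, (∀ j, x j ∈ p) ∧ ∀ i, ∑ j, A i j • x j = v i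

/-- smoothness. For a directed family of submodules, pure in one another,
each member is pure in the union; and if all members are pure in a fixed submodule `L`,
then the union is pure in `L`. -/
theorem directed_union_pure (R : Type u) [Ring R] (V : Type v) [AddCommGroup V] [Module R V]
    (ι : Type w) [Nonempty ι] (M : ι → Submodule R V)
    (hdir : Directed (· ≤ ·) M)
    (hpure : ∀ i j : ι, M i ≤ M j → IsPureIn R (M i) (M j)) :
    (∀ i, IsPureIn R (M i) (⨆ j, M j)) ∧
      ∀ L : Submodule R V, (∀ i, IsPureIn R (M i) L) → IsPureIn R (⨆ j, M j) L := by
  have key : ∀ (n : ℕ) (x : Fin n → V), (∀ j, x j ∈ ⨆ i, M i) → ∃ k, ∀ j, x j ∈ M k := by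
    intro n x hx
    have hf : ∀ j, ∃ i, x j ∈ M i := fun j =>
      (Submodule.mem_iSup_of_directed M hdir).mp (hx j)
    choose f hf using hf
    classical
    obtain ⟨k, hk⟩ := hdir.finset_le (Finset.univ.image f)
    exact ⟨k, fun j => hk (f j) (Finset.mem_image_of_mem f (Finset.mem_univ j)) (hf j)⟩
  constructor
  · intro i
    refine ⟨le_iSup M i, ?_⟩
    rintro n m A v hv ⟨x, hx, hxe⟩
    obtain ⟨k, hk⟩ := key m x hx
    obtain ⟨k', hik', hkk'⟩ := hdir i k
    exact (hpure i k' hik').2 n m A v hv ⟨x, fun j => hkk' (hk j), hxe⟩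
  · intro L hL
    refine ⟨fun v hv => ?_, ?_⟩
    · obtain ⟨i, hi⟩ := (Submodule.mem_iSup_of_directed M hdir).mp hv
      exact (hL i).1 hi
    · rintro n m A v hv hsol
      obtain ⟨k, hk⟩ := key n v hv
      obtain ⟨x, hx, hxe⟩ := (hpure k k le_rfl).2 n m A v hk
        ((hL k).2 n m A v hk hsol)
      exact ⟨x, fun j => (le_iSup M k) (hx j), hxe⟩
end

section
/- A subgroup H of an abelian group G is a pure subgroup (i.e., nG ∩ H = nH for all n) if and only if for every finite tuple h̄ from H and every finite system of ℤ-linear equations over h̄ solvable in G, the system is solvable in H. -/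
/-!
Purity for `ℕ`-multiples gives purity for `ℤ`-multiples. A solution `x` of the system `A x = v`
in `G` is a homomorphism `φ : ℤ^m → G` sending the row lattice `N = span (rows of A)` into `H`.
A Smith normal form gives a basis `e` of `ℤ^m` and a basis `aᵢ eᵢ` of `N`; since `aᵢ` divides
`φ (aᵢ eᵢ) ∈ H` in `G`, purity lets us send `eᵢ` to some `hᵢ ∈ H` with `aᵢ hᵢ = φ (aᵢ eᵢ)`.
The resulting homomorphism into `H` agrees with `φ` on `N`, hence still solves the system.
Conversely, `n x = h` is a one-equation system.
-/

namespace AddSubgroup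

variable {G : Type*} [AddCommGroup G]

def IsPure (H : AddSubgroup G) : Prop :=
  ∀ (n : ℕ) (h : G), h ∈ H → (∃ g : G, n • g = h) → ∃ h' ∈ H, n • h' = h

variable {H : AddSubgroup G}

theorem IsPure.exists_zsmul_eq (hH : H.IsPure) {a : ℤ} {w : G} (hw : w ∈ H)
    (hdvd : ∃ g : G, a • g = w) : ∃ h ∈ H, a • h = w := by
  obtain ⟨g, rfl⟩ := hdvd
  obtain ⟨n, rfl | rfl⟩ := Int.eq_nat_or_neg a
  · simp only [natCast_zsmul] at hw ⊢
    exact hH n _ hw ⟨g, rfl⟩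
  · simp only [neg_zsmul, natCast_zsmul, neg_mem_iff, neg_inj] at hw ⊢
    exact hH n _ hw ⟨g, rfl⟩

theorem IsPure.exists_linearMap_mem_eqOn {M ι : Type*} [AddCommGroup M] [Finite ι]
    (hH : H.IsPure) (b : Module.Basis ι ℤ M) (N : Submodule ℤ M) (φ : M →ₗ[ℤ] G)
    (hφ : ∀ y ∈ N, φ y ∈ H) : ∃ ψ : M →ₗ[ℤ] G, (∀ y, ψ y ∈ H) ∧ ∀ y ∈ N, ψ y = φ y := by
  obtain ⟨n, snf⟩ := N.smithNormalForm b
  have hdvd : ∀ i, ∃ h ∈ H, snf.a i • h = φ (snf.bN i) := fun i =>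
    hH.exists_zsmul_eq (hφ _ (snf.bN i).2)
      ⟨φ (snf.bM (snf.f i)), by rw [← map_zsmul, ← snf.snf i]⟩
  choose h hmem hdvd using hdvd
  let ψ := snf.bM.constr ℤ (Function.extend snf.f h 0)
  have hψN : ψ ∘ₗ N.subtype = φ ∘ₗ N.subtype := snf.bN.ext fun i => by
    simp only [LinearMap.comp_apply, Submodule.subtype_apply, snf.snf i, map_zsmul, ψ,
      Module.Basis.constr_basis, snf.f.injective.extend_apply, hdvd]
  refine ⟨ψ, fun y => ?_, fun y hy => LinearMap.congr_fun hψN ⟨y, hy⟩⟩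
  have hrange : Set.range (Function.extend snf.f h 0) ⊆ H.toIntSubmodule := by
    refine (Set.range_extend_subset _ _ _).trans (Set.union_subset ?_ ?_)
    · rintro _ ⟨i, rfl⟩
      exact hmem i
    · rintro _ ⟨j, -, rfl⟩
      exact H.zero_mem
  have hψ : LinearMap.range ψ ≤ H.toIntSubmodule := by
    rw [Module.Basis.constr_range]
    exact Submodule.span_le.2 hrange
  exact hψ ⟨y, rfl⟩

theorem IsPure.exists_mem_solution {ι κ : Type*} [Fintype κ] (hH : H.IsPure)
    (A : ι → κ → ℤ) {v : ι → G} (hv : ∀ i, v i ∈ H)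
    (hsol : ∃ x : κ → G, ∀ i, ∑ j, A i j • x j = v i) :
    ∃ x : κ → G, (∀ j, x j ∈ H) ∧ ∀ i, ∑ j, A i j • x j = v i := by
  obtain ⟨x₀, hx₀⟩ := hsol
  let φ := Fintype.linearCombination ℤ x₀
  have hφA : ∀ i, φ (A i) = v i := fun i => by
    simp [φ, Fintype.linearCombination_apply, hx₀]
  have hφ : ∀ y ∈ Submodule.span ℤ (Set.range A), φ y ∈ H := fun y hy =>
    (Submodule.span_le (p := H.toIntSubmodule.comap φ)).2
      (by rintro _ ⟨i, rfl⟩; simpa [hφA] using hv i) hy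
  obtain ⟨ψ, hψH, hψφ⟩ := hH.exists_linearMap_mem_eqOn (Pi.basisFun ℤ κ) _ φ hφ
  refine ⟨fun j => ψ (Pi.basisFun ℤ κ j), fun j => hψH _, fun i => ?_⟩
  rw [← hφA, ← hψφ _ (Submodule.subset_span ⟨i, rfl⟩)]
  conv_rhs => rw [← (Pi.basisFun ℤ κ).sum_repr (A i)]
  simp only [map_sum, map_zsmul, Pi.basisFun_repr]

end AddSubgroup

universe u

/-- A subgroup `H ≤ G` is pure (`nG ∩ H = nH` for all `n`) if and only if
every finite system of `ℤ`-linear equations with parameters from `H` that is solvable in `G`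
is solvable in `H`. -/
theorem pure_subgroup_iff_equation_solvability (G : Type u) [AddCommGroup G]
    (H : AddSubgroup G) :
    (∀ (n : ℕ) (h : G), h ∈ H → (∃ g : G, n • g = h) → ∃ h' ∈ H, n • h' = h) ↔
      ∀ (k m : ℕ) (A : Fin k → Fin m → ℤ) (v : Fin k → G), (∀ i, v i ∈ H) →
        (∃ x : Fin m → G, ∀ i, ∑ j, A i j • x j = v i) →
        ∃ x : Fin m → G, (∀ j, x j ∈ H) ∧ ∀ i, ∑ j, A i j • x j = v i := by
  refine ⟨fun hH k m A v hv hsol => AddSubgroup.IsPure.exists_mem_solution hH A hv hsol,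
    fun hsol n h hh ⟨g, hg⟩ => ?_⟩
  obtain ⟨x, hxH, hx⟩ := hsol 1 1 (fun _ _ => n) (fun _ => h) (fun _ => hh)
    ⟨fun _ => g, fun _ => by simp [hg]⟩
  exact ⟨x 0, hxH 0, by simpa using hx 0⟩
end

section
/- An R-module M is pure-injective if and only if every pp-type over a subset A ⊆ M of cardinality at most |R| + ℵ₀ that is finitely satisfiable in M (equivalently realized in some elementary extension of M) is realized in M. In particular, a pure-injective module realizes every pp-type over small subsets that is consistent with its theory. -/
universe u v w

/-- A pp-formula in one free variable with parameters from `M`: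
`∃ w₁ ... w_m, ⋀ⱼ (r j • x + ∑ₖ s j k • w k = c j)`. -/
structure PPCondition (R : Type u) (M : Type v) [Ring R] [AddCommGroup M] [Module R M] where
  l : ℕ
  m : ℕ
  r : Fin l → R
  s : Fin l → Fin m → R
  c : Fin l → M

/-- `x` realizes the pp-condition `φ` in `M`. -/
def PPCondition.Realizes {R : Type u} {M : Type v} [Ring R] [AddCommGroup M] [Module R M]
    (φ : PPCondition R M) (x : M) : Prop :=
  ∃ w : Fin φ.m → M, ∀ j, φ.r j • x + ∑ k, φ.s j k • w k = φ.c j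


namespace PPProof

open Cardinal

variable {R : Type u} [Ring R]

lemma sys_reindex {X : Type*} [AddCommGroup X] [Module R X]
    {ι ι' κ κ' : Type*} [Fintype ι] [Fintype κ] [Fintype ι'] [Fintype κ']
    (eι : ι' ≃ ι) (eκ : κ' ≃ κ) (A : ι → κ → R) (b : ι → X) :
    (∃ w : κ → X, ∀ j, ∑ k, A j k • w k = b j) ↔
      ∃ w : κ' → X, ∀ j', ∑ k', A (eι j') (eκ k') • w k' = b (eι j') := by
  constructor
  · rintro ⟨w, hw⟩
    refine ⟨fun k' => w (eκ k'), fun j' => ?_⟩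
    rw [Equiv.sum_comp eκ (fun k => A (eι j') k • w k)]
    exact hw (eι j')
  · rintro ⟨w, hw⟩
    refine ⟨fun k => w (eκ.symm k), fun j => ?_⟩
    have h2 := hw (eι.symm j)
    rw [eι.apply_symm_apply] at h2
    rw [← Equiv.sum_comp eκ (fun k => A j k • w (eκ.symm k))]
    simpa using h2


section Star
variable {M N : Type u} [AddCommGroup M] [Module R M] [AddCommGroup N] [Module R N]

/-- `h : S → M` preserves solvability of linear systems with constants in `S`. -/
def Star (S : Submodule R N) (h : S →ₗ[R] M) : Prop :=
  ∀ (n m : ℕ) (A : Fin n → Fin m → R) (c : Fin n → S),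
    (∃ w : Fin m → N, ∀ j, ∑ k, A j k • w k = (c j : N)) →
    ∃ w : Fin m → M, ∀ j, ∑ k, A j k • w k = h (c j)

lemma star_fintype {S : Submodule R N} {h : S →ₗ[R] M} (hS : Star S h)
    (ι κ : Type*) [Fintype ι] [Fintype κ] (A : ι → κ → R) (c : ι → S)
    (hN : ∃ w : κ → N, ∀ j, ∑ k, A j k • w k = ((c j : N))) :
    ∃ w : κ → M, ∀ j, ∑ k, A j k • w k = h (c j) := by
  set eι : Fin (Fintype.card ι) ≃ ι := (Fintype.equivFin ι).symm
  set eκ : Fin (Fintype.card κ) ≃ κ := (Fintype.equivFin κ).symm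
  have h1 := (sys_reindex (X := N) eι eκ A (fun j => (c j : N))).mp hN
  have h2 := hS _ _ (fun j k => A (eι j) (eκ k)) (fun j => c (eι j)) h1
  exact (sys_reindex (X := M) eι eκ A (fun j => h (c j))).mpr h2

lemma star_base (f : M →ₗ[R] N) (hf : IsPureMap R f) :
    Star (LinearMap.range f) ((LinearEquiv.ofInjective f hf.1).symm.toLinearMap) := by
  intro n m A c hN
  set e := LinearEquiv.ofInjective f hf.1
  have hre : ∀ y : LinearMap.range f, f (e.symm y) = (y : N) := by
    intro y
    have : (e (e.symm y) : N) = (y : N) := by rw [e.apply_symm_apply]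
    rwa [LinearEquiv.ofInjective_apply] at this
  have := hf.2 n m A (fun j => e.symm (c j)) (by
    refine ⟨fun k => hN.choose k, fun i => ?_⟩
    rw [hre]
    exact hN.choose_spec i)
  obtain ⟨x, hx⟩ := this
  exact ⟨x, fun j => by rw [hx j]; rfl⟩

end Star


section Comb
variable {α : Type w} (lf mf : α → ℕ) (rf : ∀ φ : α, Fin (lf φ) → R)
  (sf : ∀ φ : α, Fin (lf φ) → Fin (mf φ) → R)

def combA [DecidableEq α] : (Σ φ : α, Fin (lf φ)) → Option (Σ φ : α, Fin (mf φ)) → R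
  | ⟨φ, j⟩, none => rf φ j
  | ⟨φ, j⟩, some ⟨ψ, k⟩ => if hp : ψ = φ then sf φ j (hp ▸ k) else 0

lemma combA_none [DecidableEq α] (φ : α) (j : Fin (lf φ)) :
    combA lf mf rf sf ⟨φ, j⟩ none = rf φ j := rfl

lemma combA_some_self [DecidableEq α] (φ : α) (j : Fin (lf φ)) (k : Fin (mf φ)) :
    combA lf mf rf sf ⟨φ, j⟩ (some ⟨φ, k⟩) = sf φ j k := by
  show (if hp : φ = φ then sf φ j (hp ▸ k) else 0) = sf φ j k
  rw [dif_pos rfl]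

lemma combA_some_ne [DecidableEq α] {φ ψ : α} (hψφ : ψ ≠ φ) (j : Fin (lf φ)) (k : Fin (mf ψ)) :
    combA lf mf rf sf ⟨φ, j⟩ (some ⟨ψ, k⟩) = 0 := by
  show (if hp : ψ = φ then sf φ j (hp ▸ k) else 0) = 0
  rw [dif_neg hψφ]

lemma combA_sum [DecidableEq α] [Fintype α] {X : Type*} [AddCommGroup X] [Module R X]
    (φ : α) (j : Fin (lf φ)) (w : Option (Σ ψ : α, Fin (mf ψ)) → X) :
    ∑ o, combA lf mf rf sf ⟨φ, j⟩ o • w o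
      = rf φ j • w none + ∑ k, sf φ j k • w (some ⟨φ, k⟩) := by
  rw [Fintype.sum_option]
  congr 1
  rw [← Finset.univ_sigma_univ, Finset.sum_sigma]
  rw [Finset.sum_eq_single φ]
  · exact Finset.sum_congr rfl fun k _ => by rw [combA_some_self]
  · intro ψ _ hψ
    exact Finset.sum_eq_zero fun k _ => by rw [combA_some_ne _ _ _ _ hψ, zero_smul]
  · intro h
    exact absurd (Finset.mem_univ φ) h

end Comb


/-- The skeleton (homogeneous part) of a pp-condition. -/
def Skel (R : Type u) [Ring R] : Type u := Σ l : ℕ, Σ m : ℕ, (Fin l → R) × (Fin l → Fin m → R)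

def skel {M : Type v} [AddCommGroup M] [Module R M] (φ : PPCondition R M) : Skel R :=
  ⟨φ.l, φ.m, φ.r, φ.s⟩

lemma skel_card_le : #(Skel R) ≤ #R + ℵ₀ := by
  set Y : Type u := (List R × List (List R)) × (ULift.{u} ℕ × ULift.{u} ℕ) with hY
  have hsurj : ∃ G : Y → Skel R, Function.Surjective G := by
    refine ⟨fun y => ⟨y.2.1.down, y.2.2.down,
      fun i => y.1.1.getD i 0, fun i k => (y.1.2.getD i []).getD k 0⟩, ?_⟩
    rintro ⟨l, m, r, s⟩
    refine ⟨((List.ofFn r, List.ofFn (fun i => List.ofFn (s i))), (⟨l⟩, ⟨m⟩)), ?_⟩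
    have h1 : (fun i : Fin l => (List.ofFn r).getD i 0) = r := by
      funext i
      have hi : (i : ℕ) < (List.ofFn r).length := by simpa using i.2
      rw [List.getD_eq_getElem _ _ hi, List.getElem_ofFn]
    have h2 : (fun (i : Fin l) (k : Fin m) =>
        ((List.ofFn (fun i => List.ofFn (s i))).getD i []).getD k 0) = s := by
      funext i k
      have hi : (i : ℕ) < (List.ofFn (fun i => List.ofFn (s i))).length := by simpa using i.2
      rw [List.getD_eq_getElem _ _ hi, List.getElem_ofFn]
      have hk : (k : ℕ) < (List.ofFn (s ⟨i, by simpa using i.2⟩)).length := by simpa using k.2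
      rw [List.getD_eq_getElem _ _ hk, List.getElem_ofFn]
    show (⟨l, m, _, _⟩ : Skel R) = ⟨l, m, r, s⟩
    rw [h1, h2]
  obtain ⟨G, hG⟩ := hsurj
  have h1 : #(Skel R) ≤ #Y := Cardinal.mk_le_of_surjective hG
  refine h1.trans ?_
  have hListR : #(List R) ≤ #R + ℵ₀ := by
    rw [Cardinal.mk_list_eq_max_mk_aleph0]
    exact max_le (self_le_add_right _ _) (self_le_add_left _ _)
  have hListListR : #(List (List R)) ≤ #R + ℵ₀ := by
    rw [Cardinal.mk_list_eq_max_mk_aleph0]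
    exact max_le hListR (self_le_add_left _ _)
  have hNat : #(ULift.{u} ℕ) ≤ #R + ℵ₀ := by
    simp only [Cardinal.mk_uLift, Cardinal.mk_nat, Cardinal.lift_aleph0]
    exact self_le_add_left _ _
  have hκ : ℵ₀ ≤ #R + ℵ₀ := self_le_add_left _ _
  have hmul : (#R + ℵ₀) * (#R + ℵ₀) = #R + ℵ₀ := Cardinal.mul_eq_self hκ
  calc #Y = (#(List R) * #(List (List R))) * (#(ULift.{u} ℕ) * #(ULift.{u} ℕ)) := by
        simp [hY, Cardinal.mk_prod]
    _ ≤ ((#R + ℵ₀) * (#R + ℵ₀)) * ((#R + ℵ₀) * (#R + ℵ₀)) := by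
        gcongr
    _ = #R + ℵ₀ := by rw [hmul, hmul]

/-- solutions of pp-conditions with the same skeleton form cosets of the same subgroup -/
lemma realizes_transfer {M : Type v} [AddCommGroup M] [Module R M]
    {φ ψ : PPCondition R M} (hsk : skel φ = skel ψ) {x y : M}
    (h1 : φ.Realizes y) (h2 : ψ.Realizes y) (h3 : ψ.Realizes x) : φ.Realizes x := by
  obtain ⟨l, m, r, s, c⟩ := φ
  obtain ⟨l', m', r', s', c'⟩ := ψ
  simp only [skel] at hsk
  injection hsk with e1 e2
  subst e1
  rw [heq_eq_eq] at e2
  injection e2 with e3 e4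
  subst e3
  rw [heq_eq_eq] at e4
  injection e4 with e5 e6
  subst e5; subst e6
  obtain ⟨w1, hw1⟩ := h1
  obtain ⟨w2, hw2⟩ := h2
  obtain ⟨w3, hw3⟩ := h3
  refine ⟨fun k => w1 k + w3 k - w2 k, fun j => ?_⟩
  simp only [smul_add, smul_sub, Finset.sum_add_distrib, Finset.sum_sub_distrib]
  rw [show (∑ k, s j k • w1 k) = c j - r j • y from eq_sub_of_add_eq' (hw1 j),
      show (∑ k, s j k • w3 k) = c' j - r j • x from eq_sub_of_add_eq' (hw3 j),
      show (∑ k, s j k • w2 k) = c' j - r j • y from eq_sub_of_add_eq' (hw2 j)]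
  abel


lemma forward {M : Type u} [AddCommGroup M] [Module R M]
    (PI : IsPureInjective R M) (p : Set (PPCondition R M))
    (hfin : ∀ q : Finset (PPCondition R M), ↑q ⊆ p → ∃ x : M, ∀ φ ∈ q, φ.Realizes x) :
    ∃ x : M, ∀ φ ∈ p, φ.Realizes x := by
  classical
  -- index type: finite subsets of p
  set I : Type u := {q : Finset (PPCondition R M) // ↑q ⊆ p} with hI
  have hInonempty : Nonempty I := ⟨⟨∅, by simp⟩⟩
  choose sol hsol using fun i : I => hfin i.1 i.2
  -- the "eventually zero" submodule
  set K : Submodule R (I → M) :=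
    { carrier := {g | ∃ i₀ : I, ∀ i : I, i₀.1 ⊆ i.1 → g i = 0}
      add_mem' := by
        rintro g g' ⟨i₀, h0⟩ ⟨i₁, h1⟩
        refine ⟨⟨i₀.1 ∪ i₁.1, by
          rw [Finset.coe_union]; exact Set.union_subset i₀.2 i₁.2⟩, fun i hi => ?_⟩
        have hu := Finset.union_subset_iff.mp hi
        rw [Pi.add_apply, h0 i hu.1, h1 i hu.2, add_zero]
      zero_mem' := ⟨⟨∅, by simp⟩, fun _ _ => rfl⟩
      smul_mem' := by
        rintro r g ⟨i₀, h0⟩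
        exact ⟨i₀, fun i hi => by rw [Pi.smul_apply, h0 i hi, smul_zero]⟩ } with hK
  set d : M →ₗ[R] (I → M) := LinearMap.pi (fun _ => LinearMap.id) with hd
  set f : M →ₗ[R] ((I → M) ⧸ K) := K.mkQ.comp d with hf
  have hmem : ∀ g : I → M, g ∈ K ↔ ∃ i₀ : I, ∀ i : I, i₀.1 ⊆ i.1 → g i = 0 := fun g => Iff.rfl
  have hpure : IsPureMap R f := by
    constructor
    · intro m₁ m₂ hm
      have : d m₁ - d m₂ ∈ K := by
        rw [← Submodule.Quotient.eq]
        exact hm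
      obtain ⟨i₀, h0⟩ := this
      have := h0 i₀ (subset_refl _)
      simpa [hd, sub_eq_zero] using this
    · intro n m A v ⟨xN, hx⟩
      choose g hg using fun j : Fin m => Submodule.Quotient.mk_surjective K (xN j)
      have hKmem : ∀ i : Fin n, ((∑ j, A i j • g j) - d (v i)) ∈ K := by
        intro i
        rw [← Submodule.Quotient.eq]
        have : (Submodule.Quotient.mk (∑ j, A i j • g j) : (I → M) ⧸ K)
            = ∑ j, A i j • xN j := by
          rw [← Submodule.mkQ_apply, map_sum]
          simp only [map_smul, Submodule.mkQ_apply]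
          exact Finset.sum_congr rfl fun j _ => by rw [hg j]
        rw [this, hx i]
        rfl
      choose idx hidx using fun i : Fin n => hKmem i
      set istar : I := ⟨Finset.univ.biUnion (fun i => (idx i).1), by
        intro φ hφ
        simp only [Finset.coe_biUnion, Set.mem_iUnion] at hφ
        obtain ⟨i, _, hi⟩ := hφ
        exact (idx i).2 hi⟩ with histar
      refine ⟨fun j => g j istar, fun i => ?_⟩
      have hsub : (idx i).1 ⊆ istar.1 :=
        Finset.subset_biUnion_of_mem (fun i => (idx i).1) (Finset.mem_univ i)
      have := hidx i istar hsub
      simp only [Pi.sub_apply, Finset.sum_apply, Pi.smul_apply] at this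
      have hdv : d (v i) istar = v i := rfl
      rw [hdv] at this
      exact sub_eq_zero.mp this
  obtain ⟨gr, hgr⟩ := PI ((I → M) ⧸ K) f hpure
  -- realize in the quotient, then pull back with gr
  set solf : I → M := fun i => (sol i) with hsolf
  refine ⟨gr (K.mkQ solf), fun φ hφ => ?_⟩
  set W : I → Fin φ.m → M := fun i =>
    if h : φ ∈ i.1 then (hsol i φ h).choose else 0 with hW
  have hNreal : ∀ j, φ.r j • (K.mkQ solf) + ∑ k, φ.s j k • (K.mkQ (fun i => W i k))
      = f (φ.c j) := by
    intro j
    have : φ.r j • (K.mkQ solf) + ∑ k, φ.s j k • (K.mkQ (fun i => W i k))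
        = K.mkQ (fun i => φ.r j • solf i + ∑ k, φ.s j k • W i k) := by
      rw [← map_smul]
      rw [show (∑ k, φ.s j k • (K.mkQ (fun i => W i k)))
        = K.mkQ (∑ k, φ.s j k • (fun i => W i k)) by
          rw [map_sum]; exact Finset.sum_congr rfl fun k _ => by rw [map_smul]]
      rw [← map_add]
      congr 1
      funext i
      simp [Finset.sum_apply]
    rw [this, hf]
    simp only [LinearMap.comp_apply, Submodule.mkQ_apply]
    rw [Submodule.Quotient.eq]
    refine ⟨⟨{φ}, by simpa using hφ⟩, fun i hi => ?_⟩
    have hφi : φ ∈ i.1 := Finset.singleton_subset_iff.mp hi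
    have hWi : W i = (hsol i φ hφi).choose := by rw [hW]; exact dif_pos hφi
    have hspec := (hsol i φ hφi).choose_spec j
    simp only [Pi.sub_apply]
    rw [hWi]
    have hdc : d (φ.c j) i = φ.c j := rfl
    rw [hdc, sub_eq_zero]
    exact hspec
  refine ⟨fun k => gr (K.mkQ (fun i => W i k)), fun j => ?_⟩
  have := congrArg gr (hNreal j)
  rw [map_add, map_smul, map_sum] at this
  simp only [map_smul] at this
  rw [this]
  exact congrFun (congrArg (fun h => h.toFun) hgr) (φ.c j)


section Extension
variable {M N : Type u} [AddCommGroup M] [Module R M] [AddCommGroup N] [Module R N]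

lemma extension
    (H : ∀ A : Set M, #A ≤ #R + ℵ₀ → ∀ p : Set (PPCondition R M),
      (∀ φ ∈ p, ∀ j, φ.c j ∈ Submodule.span R A) →
      (∀ q : Finset (PPCondition R M), ↑q ⊆ p → ∃ x : M, ∀ φ ∈ q, φ.Realizes x) →
      ∃ x : M, ∀ φ ∈ p, φ.Realizes x)
    (S : Submodule R N) (h : S →ₗ[R] M) (hst : Star S h) (a : N) :
    ∃ h' : ↥(S ⊔ Submodule.span R {a}) →ₗ[R] M,
      (∀ (v : N) (hv : v ∈ S), h' ⟨v, Submodule.mem_sup_left hv⟩ = h ⟨v, hv⟩) ∧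
      Star (S ⊔ Submodule.span R {a}) h' := by
  classical
  set S' : Submodule R N := S ⊔ Submodule.span R {a} with hS'
  set ptype : Set (PPCondition R M) :=
    {φ | ∃ t : Fin φ.l → S, (∀ j, φ.c j = h (t j)) ∧
      ∃ w : Fin φ.m → N, ∀ j, φ.r j • a + ∑ k, φ.s j k • w k = (t j : N)} with hptype
  -- finite satisfiability of ptype
  have finsat : ∀ q : Finset (PPCondition R M), ↑q ⊆ ptype →
      ∃ x : M, ∀ φ ∈ q, φ.Realizes x := by
    intro q hq
    have hmem : ∀ φ : {ψ // ψ ∈ q}, φ.1 ∈ ptype := fun φ => hq φ.2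
    choose t hc wN hwN using hmem
    set lf : {ψ // ψ ∈ q} → ℕ := fun φ => φ.1.l with hlf
    set mf : {ψ // ψ ∈ q} → ℕ := fun φ => φ.1.m with hmf
    set A := combA lf mf (fun φ => φ.1.r) (fun φ => φ.1.s) with hA
    have hNs : ∃ w : Option (Σ φ : {ψ // ψ ∈ q}, Fin (mf φ)) → N,
        ∀ j : (Σ φ : {ψ // ψ ∈ q}, Fin (lf φ)), ∑ o, A j o • w o = ((t j.1 j.2 : N)) := by
      refine ⟨fun o => Option.rec a (fun p => wN p.1 p.2) o, ?_⟩
      rintro ⟨φ, j⟩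
      rw [hA, combA_sum]
      exact hwN φ j
    obtain ⟨w', hw'⟩ := star_fintype hst _ _ A (fun j => t j.1 j.2) hNs
    refine ⟨w' none, fun φ hφ => ?_⟩
    refine ⟨fun k => w' (some ⟨⟨φ, hφ⟩, k⟩), fun j => ?_⟩
    have hj := hw' ⟨⟨φ, hφ⟩, j⟩
    rw [hA, combA_sum] at hj
    rw [hc ⟨φ, hφ⟩ j]
    exact hj
  -- skeleton reduction to a small subtype
  set rep : Skel R → PPCondition R M := fun σ =>
    if hσ : ∃ φ, φ ∈ ptype ∧ skel φ = σ then hσ.choose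
    else ⟨0, 0, Fin.elim0, Fin.elim0, Fin.elim0⟩ with hrepdef
  set q₀ : Set (PPCondition R M) := {φ | φ ∈ ptype ∧ rep (skel φ) = φ} with hq₀
  have hrep : ∀ φ ∈ ptype, rep (skel φ) ∈ q₀ ∧ skel (rep (skel φ)) = skel φ := by
    intro φ hφ
    have hex : ∃ ψ, ψ ∈ ptype ∧ skel ψ = skel φ := ⟨φ, hφ, rfl⟩
    have h1 : rep (skel φ) = hex.choose := dif_pos hex
    obtain ⟨hmem2, hsk2⟩ := hex.choose_spec
    have hskrep : skel (rep (skel φ)) = skel φ := by rw [h1]; exact hsk2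
    refine ⟨⟨by rw [h1]; exact hmem2, ?_⟩, hskrep⟩
    rw [hskrep]
  -- cardinality of q₀ and its parameter set
  have hq₀card : #q₀ ≤ #R + ℵ₀ := by
    have hinj : Function.Injective (fun φ : q₀ => skel φ.1) := by
      rintro ⟨φ, hφ1, hφ2⟩ ⟨ψ, hψ1, hψ2⟩ hsk
      simp only at hsk
      refine Subtype.ext ?_
      show φ = ψ
      rw [← hφ2, ← hψ2, hsk]
    exact (Cardinal.mk_le_of_injective hinj).trans (skel_card_le)
  set Apar : Set M := ⋃ φ ∈ q₀, Set.range φ.c with hApardef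
  have hApar : #Apar ≤ #R + ℵ₀ := by
    have h1 := Cardinal.mk_biUnion_le (fun φ : PPCondition R M => Set.range φ.c) q₀
    refine h1.trans ?_
    have h2 : ⨆ φ : q₀, #(Set.range φ.1.c) ≤ ℵ₀ := by
      rcases isEmpty_or_nonempty (↥q₀) with hE | hNE
      · rw [ciSup_of_empty]
        exact bot_le
      · refine ciSup_le' fun φ => ?_
        haveI := (Set.finite_range φ.1.c).to_subtype
        exact Cardinal.mk_le_aleph0
    have hκ : ℵ₀ ≤ #R + ℵ₀ := self_le_add_left _ _
    calc #q₀ * ⨆ φ : q₀, #(Set.range φ.1.c) ≤ (#R + ℵ₀) * (#R + ℵ₀) := by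
          exact mul_le_mul' hq₀card (h2.trans hκ)
      _ = #R + ℵ₀ := Cardinal.mul_eq_self hκ
  have hspan : ∀ φ ∈ q₀, ∀ j, φ.c j ∈ Submodule.span R Apar := fun φ hφ j =>
    Submodule.subset_span (Set.mem_biUnion hφ (Set.mem_range_self j))
  have hfin0 : ∀ q : Finset (PPCondition R M), ↑q ⊆ q₀ → ∃ x : M, ∀ φ ∈ q, φ.Realizes x :=
    fun q hq => finsat q (fun φ hφ => (hq hφ).1)
  obtain ⟨x, hx⟩ := H Apar hApar q₀ hspan hfin0
  -- x realizes the whole type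
  have hall : ∀ φ ∈ ptype, φ.Realizes x := by
    intro φ hφ
    obtain ⟨hrep1, hrep2⟩ := hrep φ hφ
    obtain ⟨y, hy⟩ := finsat {φ, rep (skel φ)} (by
      intro ψ hψ
      simp only [Finset.coe_insert, Finset.coe_singleton, Set.mem_insert_iff,
        Set.mem_singleton_iff] at hψ
      rcases hψ with rfl | rfl
      · exact hφ
      · exact hrep1.1)
    exact realizes_transfer hrep2.symm (hy φ (by simp)) (hy _ (by simp)) (hx _ hrep1)
  -- decomposition of elements of S'
  have dec : ∀ y : S', ∃ sr : S × R, (y : N) = (sr.1 : N) + sr.2 • a := by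
    rintro ⟨y, hy⟩
    obtain ⟨s, hs, z, hz, rfl⟩ := Submodule.mem_sup.mp hy
    obtain ⟨r, rfl⟩ := Submodule.mem_span_singleton.mp hz
    exact ⟨(⟨s, hs⟩, r), rfl⟩
  have key : ∀ (s s' : S) (r r' : R), (s : N) + r • a = (s' : N) + r' • a →
      h s + r • x = h s' + r' • x := by
    intro s s' r r' heq
    have hφ : (⟨1, 0, fun _ => r' - r, fun _ => Fin.elim0,
        fun _ => h (s - s')⟩ : PPCondition R M) ∈ ptype := by
      refine ⟨fun _ => s - s', fun j => rfl, Fin.elim0, fun j => ?_⟩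
      simp only [Finset.univ_eq_empty, Finset.sum_empty, add_zero]
      have hcs : ((s - s' : S) : N) = (s : N) - (s' : N) := rfl
      rw [sub_smul, hcs]
      have : (s : N) - (s' : N) = r' • a - r • a := by
        rw [sub_eq_sub_iff_add_eq_add, heq]
        abel
      rw [this]
    obtain ⟨w, hw⟩ := hall _ hφ
    have h0 := hw 0
    simp only [Finset.univ_eq_empty, Finset.sum_empty, add_zero] at h0
    rw [map_sub, sub_smul] at h0
    calc h s + r • x = h s' + ((h s - h s') + r • x) := by abel
      _ = h s' + ((r' • x - r • x) + r • x) := by rw [← h0]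
      _ = h s' + r' • x := by abel
  set g0 : S' → M := fun y => h (dec y).choose.1 + (dec y).choose.2 • x with hg0
  have gspec : ∀ (y : S') (s : S) (r : R), (y : N) = (s : N) + r • a →
      g0 y = h s + r • x := by
    intro y s r hy
    exact key _ _ _ _ ((dec y).choose_spec.symm.trans hy)
  have gadd : ∀ y z : S', g0 (y + z) = g0 y + g0 z := by
    intro y z
    obtain ⟨⟨sy, ry⟩, hy⟩ := dec y
    obtain ⟨⟨sz, rz⟩, hz⟩ := dec z
    rw [gspec y sy ry hy, gspec z sz rz hz, gspec (y + z) (sy + sz) (ry + rz) (by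
      rw [Submodule.coe_add, hy, hz, Submodule.coe_add, add_smul]; abel)]
    rw [map_add, add_smul]
    abel
  have gsmul : ∀ (r : R) (y : S'), g0 (r • y) = r • g0 y := by
    intro r y
    obtain ⟨⟨sy, ry⟩, hy⟩ := dec y
    rw [gspec y sy ry hy, gspec (r • y) (r • sy) (r * ry) (by
      rw [Submodule.coe_smul, hy, smul_add, Submodule.coe_smul, smul_smul])]
    rw [map_smul, mul_smul, smul_add]
  refine ⟨{ toFun := g0, map_add' := gadd, map_smul' := gsmul }, ?_, ?_⟩
  · intro v hv
    have := gspec ⟨v, Submodule.mem_sup_left hv⟩ ⟨v, hv⟩ 0 (by rw [zero_smul, add_zero])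
    rw [zero_smul, add_zero] at this
    exact this
  · intro n m A cc hN
    set sfun : Fin n → S := fun j => (dec (cc j)).choose.1 with hsfun
    set ρ : Fin n → R := fun j => (dec (cc j)).choose.2 with hρ
    have hdec : ∀ j, ((cc j : N)) = (sfun j : N) + ρ j • a := fun j => (dec (cc j)).choose_spec
    have hφ : (⟨n, m, fun j => -ρ j, A, fun j => h (sfun j)⟩ : PPCondition R M) ∈ ptype := by
      refine ⟨sfun, fun j => rfl, ?_⟩
      obtain ⟨w, hw⟩ := hN
      refine ⟨w, fun j => ?_⟩
      rw [neg_smul, hw j, hdec j]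
      abel
    obtain ⟨w', hw'⟩ := hall _ hφ
    refine ⟨w', fun j => ?_⟩
    have hj := hw' j
    simp only [neg_smul] at hj
    show ∑ k, A j k • w' k = h (sfun j) + ρ j • x
    rw [← hj]
    abel

end Extension

section Zorn
variable {M N : Type u} [AddCommGroup M] [Module R M] [AddCommGroup N] [Module R N]

def GP (R : Type u) [Ring R] (M N : Type u) [AddCommGroup M] [Module R M]
    [AddCommGroup N] [Module R N] : Type u := Σ S : Submodule R N, (↥S →ₗ[R] M)

def gpLE (x y : GP R M N) : Prop :=
  ∃ hS : x.1 ≤ y.1, ∀ (v : N) (hv : v ∈ x.1), y.2 ⟨v, hS hv⟩ = x.2 ⟨v, hv⟩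

lemma gpLE_trans {x y z : GP R M N} (h1 : gpLE x y) (h2 : gpLE y z) : gpLE x z := by
  obtain ⟨hS1, he1⟩ := h1
  obtain ⟨hS2, he2⟩ := h2
  exact ⟨hS1.trans hS2, fun v hv => (he2 v (hS1 hv)).trans (he1 v hv)⟩

def Good (f : M →ₗ[R] N) (x : GP R M N) : Prop :=
  (∀ m : M, ∃ hm : f m ∈ x.1, x.2 ⟨f m, hm⟩ = m) ∧ Star x.1 x.2

lemma good_base (f : M →ₗ[R] N) (hf : IsPureMap R f) :
    Good f ⟨LinearMap.range f, (LinearEquiv.ofInjective f hf.1).symm.toLinearMap⟩ := by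
  constructor
  · intro m
    refine ⟨LinearMap.mem_range_self f m, ?_⟩
    show (LinearEquiv.ofInjective f hf.1).symm ⟨f m, _⟩ = m
    have : (⟨f m, LinearMap.mem_range_self f m⟩ : LinearMap.range f)
        = LinearEquiv.ofInjective f hf.1 m := by
      exact Subtype.ext (by rw [LinearEquiv.ofInjective_apply])
    rw [this, LinearEquiv.symm_apply_apply]
  · exact star_base f hf

lemma backward
    (H : ∀ A : Set M, #A ≤ #R + ℵ₀ → ∀ p : Set (PPCondition R M),
      (∀ φ ∈ p, ∀ j, φ.c j ∈ Submodule.span R A) →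
      (∀ q : Finset (PPCondition R M), ↑q ⊆ p → ∃ x : M, ∀ φ ∈ q, φ.Realizes x) →
      ∃ x : M, ∀ φ ∈ p, φ.Realizes x) :
    IsPureInjective R M := by
  classical
  intro N _ _ f hf
  -- Zorn on good partial retractions
  set GG : Type u := {x : GP R M N // Good f x} with hGG
  set base : GG := ⟨⟨LinearMap.range f, (LinearEquiv.ofInjective f hf.1).symm.toLinearMap⟩,
    good_base f hf⟩ with hbase
  have hzorn : ∃ mx : GG, ∀ z : GG, gpLE mx.1 z.1 → gpLE z.1 mx.1 := by
    refine exists_maximal_of_chains_bounded (r := fun x y : GG => gpLE x.1 y.1)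
      (fun c hc => ?_) (fun {x y z} => gpLE_trans)
    rcases Set.eq_empty_or_nonempty c with rfl | hne
    · exact ⟨base, fun a ha => absurd ha (Set.notMem_empty a)⟩
    haveI : Nonempty ↥c := hne.to_subtype
    set F : ↥c → Submodule R N := fun i => i.1.1.1 with hF
    have hdir : Directed (· ≤ ·) F := by
      intro i j
      rcases eq_or_ne i j with rfl | hij
      · exact ⟨i, le_refl _, le_refl _⟩
      have hij' : i.1 ≠ j.1 := fun hh => hij (Subtype.ext hh)
      rcases hc i.2 j.2 hij' with hle | hle
      · obtain ⟨hS, _⟩ := hle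
        exact ⟨j, hS, le_refl _⟩
      · obtain ⟨hS, _⟩ := hle
        exact ⟨i, le_refl _, hS⟩
    have compat : ∀ (i j : ↥c) (y : N) (hyi : y ∈ F i) (hyj : y ∈ F j),
        i.1.1.2 ⟨y, hyi⟩ = j.1.1.2 ⟨y, hyj⟩ := by
      intro i j y hyi hyj
      rcases eq_or_ne i j with rfl | hij
      · rfl
      have hij' : i.1 ≠ j.1 := fun hh => hij (Subtype.ext hh)
      rcases hc i.2 j.2 hij' with hle | hle
      · obtain ⟨hS, he⟩ := hle
        exact (he y hyi).symm
      · obtain ⟨hS, he⟩ := hle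
        exact he y hyj
    set Sstar : Submodule R N := ⨆ i, F i with hSstar
    have hmem : ∀ y ∈ Sstar, ∃ i, y ∈ F i := fun y hy =>
      (Submodule.mem_iSup_of_directed F hdir).mp hy
    set g0 : ↥Sstar → M := fun y =>
      (hmem y.1 y.2).choose.1.1.2 ⟨y.1, (hmem y.1 y.2).choose_spec⟩ with hg0
    have agree : ∀ (i : ↥c) (y : N) (hyS : y ∈ Sstar) (hyi : y ∈ F i),
        g0 ⟨y, hyS⟩ = i.1.1.2 ⟨y, hyi⟩ := fun i y hyS hyi =>
      compat _ i y _ hyi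
    have gadd : ∀ y z : ↥Sstar, g0 (y + z) = g0 y + g0 z := by
      intro y z
      obtain ⟨i, hi⟩ := hmem y.1 y.2
      obtain ⟨j, hj⟩ := hmem z.1 z.2
      obtain ⟨k, hik, hjk⟩ := hdir i j
      have hy : y.1 ∈ F k := hik hi
      have hz : z.1 ∈ F k := hjk hj
      have hyz : y.1 + z.1 ∈ F k := (F k).add_mem hy hz
      have e1 : g0 (y + z) = k.1.1.2 ⟨y.1 + z.1, hyz⟩ := agree k (y.1 + z.1) (y + z).2 hyz
      have e2 : g0 y = k.1.1.2 ⟨y.1, hy⟩ := agree k y.1 y.2 hy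
      have e3 : g0 z = k.1.1.2 ⟨z.1, hz⟩ := agree k z.1 z.2 hz
      rw [e1, e2, e3, show (⟨y.1 + z.1, hyz⟩ : ↥(F k)) = ⟨y.1, hy⟩ + ⟨z.1, hz⟩ from rfl,
        map_add]
    have gsmul : ∀ (r : R) (y : ↥Sstar), g0 (r • y) = r • g0 y := by
      intro r y
      obtain ⟨i, hi⟩ := hmem y.1 y.2
      have hry : r • y.1 ∈ F i := (F i).smul_mem r hi
      have e1 : g0 (r • y) = i.1.1.2 ⟨r • y.1, hry⟩ := agree i (r • y.1) (r • y).2 hry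
      have e2 : g0 y = i.1.1.2 ⟨y.1, hi⟩ := agree i y.1 y.2 hi
      rw [e1, e2, show (⟨r • y.1, hry⟩ : ↥(F i)) = r • ⟨y.1, hi⟩ from rfl, map_smul]
    set hmap : ↥Sstar →ₗ[R] M :=
      { toFun := g0, map_add' := gadd, map_smul' := gsmul } with hhmap
    have hgood : Good f ⟨Sstar, hmap⟩ := by
      constructor
      · intro m
        have i0 : ↥c := Classical.arbitrary _
        obtain ⟨hmi, hvi⟩ := i0.1.2.1 m
        refine ⟨le_iSup F i0 hmi, ?_⟩
        show g0 ⟨f m, _⟩ = m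
        rw [agree i0 (f m) (le_iSup F i0 hmi) hmi]
        exact hvi
      · intro n m A cc hNs
        choose idx hidx using fun j : Fin n => hmem (cc j).1 (cc j).2
        obtain ⟨u, hu⟩ := hdir.finset_le (Finset.image idx Finset.univ)
        have hcu : ∀ j, ((cc j : N)) ∈ F u := fun j =>
          hu (idx j) (Finset.mem_image_of_mem idx (Finset.mem_univ j)) (hidx j)
        obtain ⟨w, hw⟩ := u.1.2.2 n m A (fun j => ⟨cc j, hcu j⟩) (by
          obtain ⟨w, hw⟩ := hNs
          exact ⟨w, fun j => hw j⟩)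
        refine ⟨w, fun j => ?_⟩
        rw [hw j]
        exact (agree u (cc j) (cc j).2 (hcu j)).symm
    refine ⟨⟨⟨Sstar, hmap⟩, hgood⟩, fun a ha => ?_⟩
    refine ⟨le_iSup F ⟨a, ha⟩, fun v hv => ?_⟩
    exact agree ⟨a, ha⟩ v (le_iSup F ⟨a, ha⟩ hv) hv
  -- use the maximal element
  obtain ⟨mx, hmx⟩ := hzorn
  have hTop : mx.1.1 = ⊤ := by
    by_contra hne
    obtain ⟨a, ha⟩ : ∃ a : N, a ∉ mx.1.1 := by
      by_contra hall
      push_neg at hall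
      exact hne (Submodule.eq_top_iff'.mpr hall)
    obtain ⟨h', hext, hstar'⟩ := extension H mx.1.1 mx.1.2 mx.2.2 a
    have hgood' : Good f ⟨mx.1.1 ⊔ Submodule.span R {a}, h'⟩ := by
      constructor
      · intro m
        obtain ⟨hm, hv⟩ := mx.2.1 m
        exact ⟨Submodule.mem_sup_left hm, by rw [hext (f m) hm]; exact hv⟩
      · exact hstar'
    have hle : gpLE mx.1 ⟨mx.1.1 ⊔ Submodule.span R {a}, h'⟩ :=
      ⟨le_sup_left, fun v hv => hext v hv⟩
    obtain ⟨hS, _⟩ := hmx ⟨_, hgood'⟩ hle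
    exact ha (hS (Submodule.mem_sup_right (Submodule.mem_span_singleton_self a)))
  refine ⟨mx.1.2.comp (LinearMap.codRestrict mx.1.1 LinearMap.id fun x => by
    rw [hTop]; exact Submodule.mem_top), ?_⟩
  apply LinearMap.ext
  intro m0
  obtain ⟨hm, hv⟩ := mx.2.1 m0
  exact hv

end Zorn

end PPProof

/-- An `R`-module `M` is pure-injective if and only if every pp-type over
a subset `A ⊆ M` of cardinality at most `|R| + ℵ₀` which is finitely satisfiable in `M`
is realized in `M`. -/
theorem pureInjective_iff_realizes_small_ppTypes (R : Type u) [Ring R] (M : Type u)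
    [AddCommGroup M] [Module R M] :
    IsPureInjective R M ↔
      ∀ A : Set M, Cardinal.mk A ≤ Cardinal.mk R + Cardinal.aleph0 →
        ∀ p : Set (PPCondition R M),
          (∀ φ ∈ p, ∀ j, φ.c j ∈ Submodule.span R A) →
          (∀ q : Finset (PPCondition R M), ↑q ⊆ p → ∃ x : M, ∀ φ ∈ q, φ.Realizes x) →
          ∃ x : M, ∀ φ ∈ p, φ.Realizes x := by
  constructor
  · intro PI A hA p hspan hfin
    exact PPProof.forward PI p hfin
  · intro H
    exact PPProof.backward (fun A hA => H A hA)
end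

section
/- If G is an abelian group that is the union of a countable increasing chain G₀ ≤ G₁ ≤ ⋯ of pure subgroups, where each Gᵢ₊₁ contains a copy of every pure extension of Gᵢ of the same cardinality fixing Gᵢ (i.e., Gᵢ₊₁ is universal over Gᵢ), and P is a pure-injective abelian group universal in the class at that cardinality, then G ≅ P^(ℕ) provided P^(ℕ) is also such a union; in the concrete case: a direct sum of countably many copies of a pure-injective universal module U, built as the union of the chain U ≤ U⊕U ≤ U⊕U⊕U ≤ ⋯, has the property that each U^(n+1) is universal over U^(n). -/
universe u v w

/-- The extension-by-zero embedding `U^n → U^(n+1)`. -/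
def extZero (R : Type u) [Ring R] (U : Type v) [AddCommGroup U] [Module R U] (n : ℕ) :
    (Fin n → U) →ₗ[R] (Fin (n + 1) → U) :=
  LinearMap.pi fun i : Fin (n + 1) =>
    if h : (i : ℕ) < n then LinearMap.proj (R := R) (φ := fun _ : Fin n => U) ⟨i, h⟩ else 0

set_option linter.unusedVariables false
set_option linter.unnecessarySeqFocus false

section aux
variable {R : Type u} [Ring R] {M N P : Type*} [AddCommGroup M] [Module R M]
  [AddCommGroup N] [Module R N] [AddCommGroup P] [Module R P]

lemma IsPureMap.comp' {f : M →ₗ[R] N} {g : N →ₗ[R] P} (hf : IsPureMap R f)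
    (hg : IsPureMap R g) : IsPureMap R (g.comp f) := by
  refine ⟨hg.1.comp hf.1, ?_⟩
  intro n m A v ⟨x, hx⟩
  obtain ⟨y, hy⟩ := hg.2 n m A (fun i => f (v i)) ⟨x, by simpa using hx⟩
  exact hf.2 n m A v ⟨y, hy⟩

lemma isPureMap_of_split {f : M →ₗ[R] N} (r : N →ₗ[R] M)
    (hr : r.comp f = LinearMap.id) : IsPureMap R f := by
  have hrf : ∀ x, r (f x) = x := fun x => congrArg (· x) hr
  refine ⟨fun a b h => by rw [← hrf a, ← hrf b, h], ?_⟩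
  rintro n m A v ⟨x, hx⟩
  refine ⟨fun j => r (x j), fun i => ?_⟩
  have := congrArg r (hx i)
  simpa [map_sum, map_smul, hrf] using this
end aux
variable {R : Type u} [Ring R]

lemma isPureInjective_prod {M₁ : Type v} {M₂ : Type v} [AddCommGroup M₁] [Module R M₁]
    [AddCommGroup M₂] [Module R M₂] (h₁ : IsPureInjective R M₁) (h₂ : IsPureInjective R M₂) :
    IsPureInjective R (M₁ × M₂) := by
  intro N _ _ f hf
  have hinr : IsPureMap R (LinearMap.inr R M₁ M₂) :=
    isPureMap_of_split (LinearMap.snd R M₁ M₂) (by ext x <;> simp)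
  obtain ⟨r₂, hr₂⟩ := h₂ N (f.comp (LinearMap.inr R M₁ M₂)) (hinr.comp' hf)
  have hr₂' : ∀ m₂, r₂ (f (0, m₂)) = m₂ := fun m₂ => congrArg (· m₂) hr₂
  set t : M₁ →ₗ[R] M₂ := (r₂.comp f).comp (LinearMap.inl R M₁ M₂) with ht
  set u : M₁ →ₗ[R] M₁ × M₂ := LinearMap.prod LinearMap.id (-t) with hu
  have hupure : IsPureMap R u :=
    isPureMap_of_split (LinearMap.fst R M₁ M₂) (by ext x; simp [hu])
  obtain ⟨r₁, hr₁⟩ := h₁ N (f.comp u) (hupure.comp' hf)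
  have hr₁' : ∀ m₁, r₁ (f (m₁, -t m₁)) = m₁ := fun m₁ => congrArg (· m₁) hr₁
  set e : N →ₗ[R] N := LinearMap.id - (f.comp (LinearMap.inr R M₁ M₂)).comp r₂ with he
  set p : N →ₗ[R] M₁ := r₁.comp e with hp
  set q : N →ₗ[R] M₂ := r₂ - t.comp p with hq
  have ht' : ∀ m₁, t m₁ = r₂ (f (m₁, 0)) := fun m₁ => rfl
  have fact1 : ∀ m₁, p (f (m₁, (0:M₂))) = m₁ := by
    intro m₁
    have he1 : e (f (m₁, 0)) = f (m₁, -t m₁) := by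
      simp only [he, LinearMap.sub_apply, LinearMap.id_apply, LinearMap.comp_apply,
        LinearMap.inr_apply, ← ht']
      rw [show ((m₁, -t m₁) : M₁ × M₂) = (m₁, 0) - (0, t m₁) by simp [Prod.ext_iff], map_sub]
    simp [hp, he1, hr₁']
  have fact2 : ∀ m₂, p (f ((0:M₁), m₂)) = 0 := by
    intro m₂
    have he2 : e (f (0, m₂)) = 0 := by
      simp [he, hr₂']
    simp [hp, he2]
  have fact3 : ∀ m₂, q (f ((0:M₁), m₂)) = m₂ := by
    intro m₂; simp [hq, hr₂', fact2]
  have fact4 : ∀ m₁, q (f (m₁, (0:M₂))) = 0 := by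
    intro m₁; simp [hq, fact1, ← ht']
  refine ⟨LinearMap.prod p q, ?_⟩
  apply LinearMap.ext
  rintro ⟨m₁, m₂⟩
  have h12 : ((m₁, m₂) : M₁ × M₂) = (m₁, 0) + (0, m₂) := by simp
  rw [LinearMap.comp_apply, LinearMap.id_apply, h12, map_add]
  simp [map_add, LinearMap.prod_apply, Pi.prod, fact1, fact2, fact3, fact4, Prod.ext_iff]

section aux2
variable {R : Type u} [Ring R]

/-- The snoc linear equivalence data: `(Fin n → U) × U → (Fin (n+1) → U)`. -/
def snocMap (R : Type u) [Ring R] (U : Type v) [AddCommGroup U] [Module R U] (n : ℕ) :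
    ((Fin n → U) × U) →ₗ[R] (Fin (n + 1) → U) where
  toFun p := Fin.snoc p.1 p.2
  map_add' a b := by
    funext i
    induction i using Fin.lastCases <;> simp
  map_smul' c a := by
    funext i
    induction i using Fin.lastCases <;> simp

def snocRetr (R : Type u) [Ring R] (U : Type v) [AddCommGroup U] [Module R U] (n : ℕ) :
    (Fin (n + 1) → U) →ₗ[R] ((Fin n → U) × U) :=
  LinearMap.prod
    (LinearMap.pi fun t : Fin n => LinearMap.proj (R := R) (φ := fun _ : Fin (n+1) => U) t.castSucc)
    (LinearMap.proj (Fin.last n))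

lemma snocRetr_comp (R : Type u) [Ring R] (U : Type v) [AddCommGroup U] [Module R U] (n : ℕ) :
    (snocRetr R U n).comp (snocMap R U n) = LinearMap.id := by
  apply LinearMap.ext; intro p
  refine Prod.ext ?_ ?_
  · funext t
    simp [snocRetr, snocMap]
  · simp [snocRetr, snocMap]

lemma snocMap_retr (R : Type u) [Ring R] (U : Type v) [AddCommGroup U] [Module R U] (n : ℕ)
    (x : Fin (n + 1) → U) : snocMap R U n (snocRetr R U n x) = x := by
  funext i
  induction i using Fin.lastCases <;> simp [snocRetr, snocMap]

lemma isPureInjective_pi_fin {U : Type v} [AddCommGroup U] [Module R U]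
    (hU : IsPureInjective R U) : ∀ n, IsPureInjective R (Fin n → U) := by
  intro n
  induction n with
  | zero =>
    intro N _ _ f hf
    refine ⟨0, ?_⟩
    apply LinearMap.ext; intro x; funext i; exact i.elim0
  | succ n ih =>
    intro N _ _ f hf
    have hsplit : IsPureMap R (snocMap R U n) :=
      isPureMap_of_split (snocRetr R U n) (snocRetr_comp R U n)
    obtain ⟨g', hg'⟩ := isPureInjective_prod ih hU N (f.comp (snocMap R U n)) (hsplit.comp' hf)
    refine ⟨(snocMap R U n).comp g', ?_⟩
    apply LinearMap.ext; intro x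
    have h1 : g' (f (snocMap R U n (snocRetr R U n x))) = snocRetr R U n x :=
      congrArg (· (snocRetr R U n x)) hg'
    rw [snocMap_retr] at h1
    simp only [LinearMap.comp_apply, LinearMap.id_apply, h1, snocMap_retr]

lemma extZero_pure (R : Type u) [Ring R] (U : Type v) [AddCommGroup U] [Module R U] (n : ℕ) :
    IsPureMap R (extZero R U n) := by
  refine isPureMap_of_split
    (LinearMap.pi fun t : Fin n =>
      LinearMap.proj (R := R) (φ := fun _ : Fin (n+1) => U) t.castSucc) ?_
  apply LinearMap.ext; intro v; funext t
  have ht : ((t.castSucc : Fin (n+1)) : ℕ) < n := t.isLt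
  simp [extZero, LinearMap.pi_apply, dif_pos ht]

lemma universal_over_pow {R : Type u} [Ring R] {U : Type v} [AddCommGroup U] [Module R U]
    (hU : IsPureInjective R U) (n : ℕ) {N : Type v} [AddCommGroup N] [Module R N]
    (f : (Fin n → U) →ₗ[R] N) (hf : IsPureMap R f) (h : N →ₗ[R] U) (hh : IsPureMap R h) :
    ∃ g : N →ₗ[R] (Fin (n + 1) → U), IsPureMap R g ∧ g.comp f = extZero R U n := by
  obtain ⟨r, hr⟩ := isPureInjective_pi_fin hU n N f hf
  have hrf : ∀ v, r (f v) = v := fun v => congrArg (· v) hr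
  set h' : N →ₗ[R] U := h - (h.comp f).comp r with hh'
  set g : N →ₗ[R] (Fin (n + 1) → U) := LinearMap.pi (fun i : Fin (n + 1) =>
    if hi : (i : ℕ) < n then
      (LinearMap.proj (R := R) (φ := fun _ : Fin n => U) ⟨i, hi⟩).comp r
    else h') with hg
  have hgcast : ∀ x (t : Fin n), g x t.castSucc = r x t := by
    intro x t
    have ht : ((t.castSucc : Fin (n+1)) : ℕ) < n := t.isLt
    simp [hg, LinearMap.pi_apply, dif_pos ht]
  have hglast : ∀ x, g x (Fin.last n) = h x - h (f (r x)) := by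
    intro x
    have ht : ¬ (((Fin.last n) : Fin (n+1)) : ℕ) < n := by simp
    simp [hg, LinearMap.pi_apply, dif_neg ht, hh']
  have hcomp : g.comp f = extZero R U n := by
    apply LinearMap.ext; intro v; funext i
    induction i using Fin.lastCases with
    | last =>
      rw [LinearMap.comp_apply, hglast, hrf]
      have : ¬ (((Fin.last n) : Fin (n+1)) : ℕ) < n := by simp
      simp [extZero, LinearMap.pi_apply, dif_neg this]
    | cast t =>
      rw [LinearMap.comp_apply, hgcast, hrf]
      have ht : ((t.castSucc : Fin (n+1)) : ℕ) < n := t.isLt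
      simp [extZero, LinearMap.pi_apply, dif_pos ht]
  refine ⟨g, ⟨?_, ?_⟩, hcomp⟩
  · -- injective
    have hker : ∀ x, g x = 0 → x = 0 := by
      intro x hx
      have hr0 : r x = 0 := by
        funext t
        have := congrFun hx t.castSucc
        rwa [hgcast] at this
      have := congrFun hx (Fin.last n)
      rw [hglast, hr0, map_zero, map_zero, sub_zero] at this
      exact hh.1 (by simpa using this)
    intro a b hab
    have := hker (a - b) (by rw [map_sub, hab, sub_self])
    exact sub_eq_zero.mp this
  · -- solvability
    rintro k m A v ⟨x, hx⟩
    have hcast : ∀ i (t : Fin n), (∑ j, A i j • x j) t.castSucc = r (v i) t := by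
      intro i t
      rw [hx i, hgcast]
    have hlast : ∀ i, (∑ j, A i j • x j) (Fin.last n) = h (v i - f (r (v i))) := by
      intro i
      rw [hx i, hglast, map_sub]
    obtain ⟨y, hy⟩ := hh.2 k m A (fun i => v i - f (r (v i)))
      ⟨fun j => x j (Fin.last n), fun i => by
        have := hlast i
        simpa [Finset.sum_apply, Pi.smul_apply] using this⟩
    refine ⟨fun j => y j + f (fun t => x j t.castSucc), fun i => ?_⟩
    have hsum : (fun t => ∑ j, A i j • x j t.castSucc) = r (v i) := by
      funext t
      have := hcast i t
      simpa [Finset.sum_apply, Pi.smul_apply] using this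
    calc ∑ j, A i j • (y j + f (fun t => x j t.castSucc))
        = (∑ j, A i j • y j) + ∑ j, A i j • f (fun t => x j t.castSucc) := by
          rw [← Finset.sum_add_distrib]; simp [smul_add]
      _ = (v i - f (r (v i))) + f (fun t => ∑ j, A i j • x j t.castSucc) := by
          rw [hy i]
          congr 1
          have hms : ∑ j, A i j • f (fun t => x j t.castSucc)
              = f (∑ j, A i j • (fun t => x j t.castSucc)) := by
            rw [map_sum]; simp_rw [map_smul]
          rw [hms]
          congr 1
          funext t
          simp [Finset.sum_apply, Pi.smul_apply]
      _ = v i := by rw [show (fun t => ∑ j, A i j • x j t.castSucc) = r (v i) from hsum]; simp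

end aux2

lemma chain_iso {R : Type u} [Ring R] {V W : Type v} [AddCommGroup V] [Module R V]
    [AddCommGroup W] [Module R W]
    (A : ℕ → Submodule R V) (B : ℕ → Submodule R W) (hmA : Monotone A) (hmB : Monotone B)
    (hsA : (⨆ i, A i) = ⊤) (hsB : (⨆ i, B i) = ⊤)
    (F : ∀ n, ↥(A n) →ₗ[R] ↥(B (n + 1)))
    (G : ∀ n, ↥(B (n + 1)) →ₗ[R] ↥(A (n + 1)))
    (hGF : ∀ n, (G n).comp (F n) = Submodule.inclusion (hmA (Nat.le_succ n)))
    (hFG : ∀ n, (F (n + 1)).comp (G n) = Submodule.inclusion (hmB (Nat.le_succ (n + 1)))) :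
    Nonempty (V ≃ₗ[R] W) := by
  classical
  set φ : ∀ n, ↥(A n) →ₗ[R] W := fun n => (B (n + 1)).subtype.comp (F n) with hφdef
  set ψ : ∀ n, ↥(B (n + 1)) →ₗ[R] V := fun n => (A (n + 1)).subtype.comp (G n) with hψdef
  have hGF' : ∀ n (a : ↥(A n)), G n (F n a) = Submodule.inclusion (hmA (Nat.le_succ n)) a :=
    fun n a => congrArg (· a) (hGF n)
  have hFG' : ∀ n (b : ↥(B (n + 1))), F (n + 1) (G n b)
      = Submodule.inclusion (hmB (Nat.le_succ (n + 1))) b :=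
    fun n b => congrArg (· b) (hFG n)
  have hφstep : ∀ n x (hx : x ∈ A n) (hx' : x ∈ A (n + 1)),
      φ (n + 1) ⟨x, hx'⟩ = φ n ⟨x, hx⟩ := by
    intro n x hx hx'
    have h1 : (⟨x, hx'⟩ : ↥(A (n + 1))) = Submodule.inclusion (hmA (Nat.le_succ n)) ⟨x, hx⟩ :=
      Subtype.ext rfl
    show ((F (n + 1)) ⟨x, hx'⟩ : W) = ((F n) ⟨x, hx⟩ : W)
    rw [h1, ← hGF' n, hFG' n]
    rfl
  have hφmono : ∀ m n, m ≤ n → ∀ x (hx : x ∈ A m) (hx' : x ∈ A n),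
      φ n ⟨x, hx'⟩ = φ m ⟨x, hx⟩ := by
    intro m n hmn
    induction n, hmn using Nat.le_induction with
    | base => intro x hx hx'; rfl
    | succ n hmn ih =>
      intro x hx hx'
      have hxn : x ∈ A n := hmA hmn hx
      rw [hφstep n x hxn hx', ih x hx hxn]
  have hψstep : ∀ n y (hy : y ∈ B (n + 1)) (hy' : y ∈ B (n + 2)),
      ψ (n + 1) ⟨y, hy'⟩ = ψ n ⟨y, hy⟩ := by
    intro n y hy hy'
    have h1 : (⟨y, hy'⟩ : ↥(B (n + 2))) = Submodule.inclusion (hmB (Nat.le_succ (n + 1))) ⟨y, hy⟩ :=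
      Subtype.ext rfl
    show ((G (n + 1)) ⟨y, hy'⟩ : V) = ((G n) ⟨y, hy⟩ : V)
    rw [h1, ← hFG' n, hGF' (n + 1)]
    rfl
  have hψmono : ∀ m n, m ≤ n → ∀ y (hy : y ∈ B (m + 1)) (hy' : y ∈ B (n + 1)),
      ψ n ⟨y, hy'⟩ = ψ m ⟨y, hy⟩ := by
    intro m n hmn
    induction n, hmn using Nat.le_induction with
    | base => intro y hy hy'; rfl
    | succ n hmn ih =>
      intro y hy hy'
      have hyn : y ∈ B (n + 1) := hmB (Nat.succ_le_succ hmn) hy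
      rw [hψstep n y hyn hy', ih y hy hyn]
  have hexA : ∀ x : V, ∃ n, x ∈ A n := by
    intro x
    have hx : x ∈ (⨆ i, A i) := hsA ▸ Submodule.mem_top
    exact (Submodule.mem_iSup_of_directed A (hmA.directed_le)).mp hx
  have hexB : ∀ y : W, ∃ n, y ∈ B (n + 1) := by
    intro y
    have hy : y ∈ (⨆ i, B i) := hsB ▸ Submodule.mem_top
    obtain ⟨n, hn⟩ := (Submodule.mem_iSup_of_directed B (hmB.directed_le)).mp hy
    exact ⟨n, hmB (Nat.le_succ n) hn⟩
  choose idxA memA using hexA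
  choose idxB memB using hexB
  have hΦ : ∀ (x : V) (n) (hx : x ∈ A n), φ (idxA x) ⟨x, memA x⟩ = φ n ⟨x, hx⟩ := by
    intro x n hx
    rcases le_total (idxA x) n with h | h
    · exact (hφmono (idxA x) n h x (memA x) hx).symm
    · exact hφmono n (idxA x) h x hx (memA x)
  have hΨ : ∀ (y : W) (n) (hy : y ∈ B (n + 1)), ψ (idxB y) ⟨y, memB y⟩ = ψ n ⟨y, hy⟩ := by
    intro y n hy
    rcases le_total (idxB y) n with h | h
    · exact (hψmono (idxB y) n h y (memB y) hy).symm
    · exact hψmono n (idxB y) h y hy (memB y)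
  refine ⟨{ toFun := fun x => φ (idxA x) ⟨x, memA x⟩,
            map_add' := ?_, map_smul' := ?_,
            invFun := fun y => ψ (idxB y) ⟨y, memB y⟩,
            left_inv := ?_, right_inv := ?_ }⟩
  · intro x y
    set n := max (idxA x) (idxA y) with hn
    have hx : x ∈ A n := hmA (le_max_left _ _) (memA x)
    have hy : y ∈ A n := hmA (le_max_right _ _) (memA y)
    have hxy : x + y ∈ A n := (A n).add_mem hx hy
    show φ (idxA (x + y)) ⟨x + y, memA _⟩
        = φ (idxA x) ⟨x, memA x⟩ + φ (idxA y) ⟨y, memA y⟩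
    rw [hΦ (x + y) n hxy, hΦ x n hx, hΦ y n hy]
    have : (⟨x + y, hxy⟩ : ↥(A n)) = ⟨x, hx⟩ + ⟨y, hy⟩ := rfl
    rw [this, map_add]
  · intro c x
    have hx : c • x ∈ A (idxA x) := (A (idxA x)).smul_mem c (memA x)
    show φ (idxA (c • x)) ⟨c • x, memA _⟩ = (RingHom.id R) c • φ (idxA x) ⟨x, memA x⟩
    rw [hΦ (c • x) (idxA x) hx]
    have : (⟨c • x, hx⟩ : ↥(A (idxA x))) = c • ⟨x, memA x⟩ := rfl
    rw [this, map_smul]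
    rfl
  · intro x
    set n := idxA x with hn
    have hmem : φ n ⟨x, memA x⟩ ∈ B (n + 1) := (F n ⟨x, memA x⟩).2
    show ψ (idxB (φ n ⟨x, memA x⟩)) ⟨_, memB _⟩ = x
    rw [hΨ _ n hmem]
    have h2 : (⟨φ n ⟨x, memA x⟩, hmem⟩ : ↥(B (n + 1))) = F n ⟨x, memA x⟩ := Subtype.ext rfl
    show ((G n) ⟨φ n ⟨x, memA x⟩, hmem⟩ : V) = x
    rw [h2, hGF' n]
    rfl
  · intro y
    set n := idxB y with hn
    have hmem : ψ n ⟨y, memB y⟩ ∈ A (n + 1) := (G n ⟨y, memB y⟩).2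
    show φ (idxA (ψ n ⟨y, memB y⟩)) ⟨_, memA _⟩ = y
    rw [hΦ _ (n + 1) hmem]
    have h2 : (⟨ψ n ⟨y, memB y⟩, hmem⟩ : ↥(A (n + 1))) = G n ⟨y, memB y⟩ := Subtype.ext rfl
    show ((F (n + 1)) ⟨ψ n ⟨y, memB y⟩, hmem⟩ : W) = y
    rw [h2, hFG' n]
    rfl

/-- Let `K` be a class of `R`-modules (of cardinality `λ`) closed under
direct sums, with pure embeddings, and let `U` be a pure-injective member of `K` of
cardinality `λ` which is universal in `K_λ`. Then:

(1) (the concrete chain `U ≤ U ⊕ U ≤ U ⊕ U ⊕ U ≤ ⋯`) each extension-by-zero embedding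
`U^n → U^(n+1)` is pure and `U^(n+1)` is universal over `U^n`: every pure embedding of
`U^n` into a member `N` of `K` of cardinality `λ` extends to a pure embedding of `N` into
`U^(n+1)`;

(2) if `G` (here the module `V`) is the union of a countable increasing chain of pure
submodules `A 0 ≤ A 1 ≤ ⋯`, each in `K` of cardinality `λ` with `A (i+1)` universal over
`A i`, and the direct sum `U^(ℕ)` (here `ℕ →₀ U`) is likewise such a union of a chain `B`,
then `G ≅ U^(ℕ)`. -/
theorem limit_chain_isomorphic_to_countable_power_of_pureInjective_universal
    (R : Type u) [Ring R] (K : ModuleCat.{u} R → Prop)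
    (hK : ∀ A B : ModuleCat.{u} R, K A → K B → K (ModuleCat.of R (↑A × ↑B)))
    (lam : Cardinal.{u})
    (U : ModuleCat.{u} R) (hUK : K U) (hUpi : IsPureInjective R ↑U)
    (hUcard : Cardinal.mk ↑U = lam)
    (hUuniv : ∀ N : ModuleCat.{u} R, K N → Cardinal.mk ↑N = lam →
      ∃ f : ↑N →ₗ[R] ↑U, IsPureMap R f) :
    (∀ n : ℕ, IsPureMap R (extZero R ↑U n) ∧
      ∀ N : ModuleCat.{u} R, K N → Cardinal.mk ↑N = lam →
        ∀ f : (Fin n → ↑U) →ₗ[R] ↑N, IsPureMap R f →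
          ∃ g : ↑N →ₗ[R] (Fin (n + 1) → ↑U),
            IsPureMap R g ∧ g.comp f = extZero R ↑U n) ∧
    (∀ (V : Type u) [AddCommGroup V] [Module R V]
        (A : ℕ → Submodule R V) (hmonoA : Monotone A),
      (⨆ i, A i) = ⊤ →
      (∀ i, IsPureMap R (A i).subtype) →
      (∀ i, K (ModuleCat.of R ↥(A i)) ∧ Cardinal.mk ↥(A i) = lam) →
      (∀ (i : ℕ) (N : ModuleCat.{u} R), K N → Cardinal.mk ↑N = lam →
        ∀ f : ↥(A i) →ₗ[R] ↑N, IsPureMap R f →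
          ∃ g : ↑N →ₗ[R] ↥(A (i + 1)), IsPureMap R g ∧
            g.comp f = Submodule.inclusion (hmonoA (Nat.le_succ i))) →
      ∀ (B : ℕ → Submodule R (ℕ →₀ ↑U)) (hmonoB : Monotone B),
        (⨆ i, B i) = ⊤ →
        (∀ i, IsPureMap R (B i).subtype) →
        (∀ i, K (ModuleCat.of R ↥(B i)) ∧ Cardinal.mk ↥(B i) = lam) →
        (∀ (i : ℕ) (N : ModuleCat.{u} R), K N → Cardinal.mk ↑N = lam →
          ∀ f : ↥(B i) →ₗ[R] ↑N, IsPureMap R f →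
            ∃ g : ↑N →ₗ[R] ↥(B (i + 1)), IsPureMap R g ∧
              g.comp f = Submodule.inclusion (hmonoB (Nat.le_succ i))) →
        Nonempty (V ≃ₗ[R] (ℕ →₀ ↑U))) := by
  constructor
  · -- Part (1)
    intro n
    refine ⟨extZero_pure R ↑U n, ?_⟩
    intro N hN hcard f hf
    obtain ⟨h, hh⟩ := hUuniv N hN hcard
    exact universal_over_pow hUpi n f hf h hh
  · -- Part (2)
    intro V _ _ A hmonoA hsupA hpureA hmemA hA B hmonoB hsupB hpureB hmemB hB
    classical
    choose GA hGApure hGAcomp using hA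
    choose GB hGBpure hGBcomp using hB
    obtain ⟨uA, huA⟩ := hUuniv (ModuleCat.of R ↥(A 0)) (hmemA 0).1 (hmemA 0).2
    obtain ⟨uB, huB⟩ := hUuniv (ModuleCat.of R ↥(B 0)) (hmemB 0).1 (hmemB 0).2
    have hg0pure := hGBpure 0 U hUK hUcard uB huB
    let f₀ : ↥(A 0) →ₗ[R] ↥(B 1) := (GB 0 U hUK hUcard uB huB).comp uA
    have hf₀ : IsPureMap R f₀ := huA.comp' hg0pure
    let S : ∀ n, Σ' f : ↥(A n) →ₗ[R] ↥(B (n + 1)), IsPureMap R f := fun n => Nat.rec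
      ⟨f₀, hf₀⟩
      (fun k ih =>
        ⟨GB (k + 1) (ModuleCat.of R ↥(A (k + 1))) (hmemA (k + 1)).1 (hmemA (k + 1)).2
            (GA k (ModuleCat.of R ↥(B (k + 1))) (hmemB (k + 1)).1 (hmemB (k + 1)).2 ih.1 ih.2)
            (hGApure k (ModuleCat.of R ↥(B (k + 1))) (hmemB (k + 1)).1 (hmemB (k + 1)).2
              ih.1 ih.2),
         hGBpure (k + 1) (ModuleCat.of R ↥(A (k + 1))) (hmemA (k + 1)).1 (hmemA (k + 1)).2
            (GA k (ModuleCat.of R ↥(B (k + 1))) (hmemB (k + 1)).1 (hmemB (k + 1)).2 ih.1 ih.2)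
            (hGApure k (ModuleCat.of R ↥(B (k + 1))) (hmemB (k + 1)).1 (hmemB (k + 1)).2
              ih.1 ih.2)⟩) n
    let G : ∀ n, ↥(B (n + 1)) →ₗ[R] ↥(A (n + 1)) := fun n =>
      GA n (ModuleCat.of R ↥(B (n + 1))) (hmemB (n + 1)).1 (hmemB (n + 1)).2 (S n).1 (S n).2
    have hGF : ∀ n, (G n).comp (S n).1 = Submodule.inclusion (hmonoA (Nat.le_succ n)) :=
      fun n => hGAcomp n (ModuleCat.of R ↥(B (n + 1))) (hmemB (n + 1)).1 (hmemB (n + 1)).2 (S n).1 (S n).2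
    have hFG : ∀ n, ((S (n + 1)).1).comp (G n)
        = Submodule.inclusion (hmonoB (Nat.le_succ (n + 1))) :=
      fun n => hGBcomp (n + 1) (ModuleCat.of R ↥(A (n + 1))) (hmemA (n + 1)).1 (hmemA (n + 1)).2
        (G n) (hGApure n (ModuleCat.of R ↥(B (n + 1))) (hmemB (n + 1)).1 (hmemB (n + 1)).2
          (S n).1 (S n).2)
    exact chain_iso A B hmonoA hmonoB hsupA hsupB (fun n => (S n).1) G hGF hFG
end

section
/- Let R be a ring, let M ∈ K be pure-injective of cardinality λ, and let U be a universal model of cardinality λ in a class K of R-modules closed under direct sums (with pure embeddings as morphisms). Then M ⊕ U is universal over M: for every N ∈ K of cardinality λ with M a pure submodule of N, there is a pure embedding f : N → M ⊕ U fixing M pointwise. -/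
universe u v w

/-- If `M` is pure-injective of cardinality `λ` in a class `K` closed
under direct sums, and `U ∈ K` is universal in `K_λ`, then `M ⊕ U` is universal over `M`:
any `N ∈ K` of cardinality `λ` purely containing `M` embeds purely into `M ⊕ U` over `M`. -/
theorem directSum_with_universal_is_universal_over_pureInjective
    (R : Type u) [Ring R] (K : ModuleCat.{u} R → Prop)
    (hK : ∀ A B : ModuleCat.{u} R, K A → K B → K (ModuleCat.of R (↑A × ↑B)))
    (lam : Cardinal.{u})
    (M : ModuleCat.{u} R) (hMK : K M) (hMpi : IsPureInjective R ↑M)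
    (hMcard : Cardinal.mk ↑M = lam)
    (U : ModuleCat.{u} R) (hUK : K U) (hUcard : Cardinal.mk ↑U = lam)
    (hUuniv : ∀ N : ModuleCat.{u} R, K N → Cardinal.mk ↑N = lam →
      ∃ f : ↑N →ₗ[R] ↑U, IsPureMap R f)
    (N : ModuleCat.{u} R) (hNK : K N) (hNcard : Cardinal.mk ↑N = lam)
    (ι : ↑M →ₗ[R] ↑N) (hι : IsPureMap R ι) :
    ∃ f : ↑N →ₗ[R] ↑M × ↑U, IsPureMap R f ∧ f.comp ι = LinearMap.inl R ↑M ↑U := by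
  obtain ⟨g, hg⟩ := hMpi ↑N ι hι
  obtain ⟨h, hhinj, hhpure⟩ := hUuniv N hNK hNcard
  have hgι : ∀ m : ↑M, g (ι m) = m := fun m => LinearMap.congr_fun hg m
  set k : ↑N →ₗ[R] ↑N := LinearMap.id - ι.comp g with hk
  have hkdef : ∀ a : ↑N, k a = a - ι (g a) := fun a => rfl
  have hgk : ∀ a : ↑N, g (k a) = 0 := by
    intro a
    simp [hkdef, hgι]
  have hreco : ∀ a : ↑N, ι (g a) + k a = a := by
    intro a; rw [hkdef]; abel
  refine ⟨LinearMap.prod g (h.comp k), ⟨?_, ?_⟩, ?_⟩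
  · intro a b hab
    have h1 : g a = g b := congrArg Prod.fst hab
    have h2 : h (k a) = h (k b) := congrArg Prod.snd hab
    have h3 : k a = k b := hhinj h2
    calc a = ι (g a) + k a := (hreco a).symm
      _ = ι (g b) + k b := by rw [h1, h3]
      _ = b := hreco b
  · intro n m A v ⟨x, hx⟩
    have h1 : ∀ i, ∑ j, A i j • (x j).1 = g (v i) := by
      intro i
      have := congrArg Prod.fst (hx i)
      simpa [Prod.fst_sum, Prod.smul_fst] using this
    have h2 : ∀ i, ∑ j, A i j • (x j).2 = h (k (v i)) := by
      intro i
      have := congrArg Prod.snd (hx i)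
      simpa [Prod.snd_sum, Prod.smul_snd] using this
    obtain ⟨y, hy⟩ := hhpure n m A (fun i => k (v i)) ⟨fun j => (x j).2, h2⟩
    refine ⟨fun j => ι ((x j).1) + k (y j), fun i => ?_⟩
    have : ∑ j, A i j • (ι ((x j).1) + k (y j))
        = ι (∑ j, A i j • (x j).1) + k (∑ j, A i j • y j) := by
      simp [smul_add, Finset.sum_add_distrib, map_sum, map_smul]
    rw [this, h1 i, hy i]
    have := hgk (v i)
    rw [hkdef (k (v i)), this, map_zero, sub_zero, hreco]
  · ext m
    · simp [hgι]
    · simp [hkdef, hgι]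
end
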